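/- Let M be a Hermitian operator on (ℂ²)^⊗3 that commutes with every qubit-permutation operator V_σ (σ ∈ S₃) and with U₁ = R_{2π/3}^{⊗3}, and satisfies M|GHZ⟩ = |GHZ⟩ and M|W⟩ = |W⟩. Then: (i) v₁ = (|000⟩ − |111⟩)/√2 is an eigenvector of M; (ii) v₂ = (|001⟩ − |010⟩)/√2 and v₃ = (|001⟩ − |100⟩)/√2 are eigenvectors of M with a common eigenvalue; (iii) v₄ = (|011⟩ − |101⟩)/√2 and v₅ = (|011⟩ − |110⟩)/√2 are eigenvectors of M with a common eigenvalue; and (iv) v₆ = (|011⟩ + |101⟩ + |110⟩)/√3 is an eigenvector of M. In particular, M is diagonal in the orthonormal basis {|GHZ⟩, |W⟩, v₁, ..., v₆}. -/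

import Mathlib

noncomputable section

open Matrix

/-- The three-qubit index type: (ℂ²)^⊗3 is realized as functions Fin 2 × Fin 2 × Fin 2 → ℂ. -/
abbrev T3 := Fin 2 × Fin 2 × Fin 2

/-- Standard basis vector of ℂ². -/
def e2 (i : Fin 2) : Fin 2 → ℂ := fun j => if j = i then 1 else 0

/-- The simple tensor u ⊗ v in ℂ² ⊗ ℂ². -/
def tp2 (u v : Fin 2 → ℂ) : Fin 2 × Fin 2 → ℂ := fun p => u p.1 * v p.2

/-- The simple tensor u ⊗ v ⊗ w in (ℂ²)^⊗3. -/
def tp3 (u v w : Fin 2 → ℂ) : T3 → ℂ := fun p => u p.1 * v p.2.1 * w p.2.2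

/-- Standard basis vector |ijk⟩ of (ℂ²)^⊗3. -/
def ket3 (i j k : Fin 2) : T3 → ℂ := tp3 (e2 i) (e2 j) (e2 k)

/-- The three-qubit GHZ state (|000⟩ + |111⟩)/√2. -/
def GHZ : T3 → ℂ := (Real.sqrt 2 : ℂ)⁻¹ • (ket3 0 0 0 + ket3 1 1 1)

/-- The three-qubit W state (|001⟩ + |010⟩ + |100⟩)/√3. -/
def Wst : T3 → ℂ := (Real.sqrt 3 : ℂ)⁻¹ • (ket3 0 0 1 + ket3 0 1 0 + ket3 1 0 0)

/-- Outer product |u⟩⟨v| as a matrix. -/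
def outer {n : Type*} (u v : n → ℂ) : Matrix n n ℂ := fun i j => u i * star (v j)

/-- Kronecker (tensor) product of matrices, indexed by the product type. -/
def kron {m n : Type*} (A : Matrix m m ℂ) (B : Matrix n n ℂ) :
    Matrix (m × n) (m × n) ℂ := fun p q => A p.1 q.1 * B p.2 q.2

/-- The adaptive test operator M_Z = |0⟩⟨0| ⊗ (I − |11⟩⟨11|) + |1⟩⟨1| ⊗ (|00⟩⟨00| + |11⟩⟨11|). -/
def MZ : Matrix T3 T3 ℂ :=
  kron (outer (e2 0) (e2 0)) (1 - outer (tp2 (e2 1) (e2 1)) (tp2 (e2 1) (e2 1))) +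
  kron (outer (e2 1) (e2 1))
    (outer (tp2 (e2 0) (e2 0)) (tp2 (e2 0) (e2 0)) + outer (tp2 (e2 1) (e2 1)) (tp2 (e2 1) (e2 1)))

/-- |x₊⟩ = cos α |0⟩ + sin α |1⟩. -/
def xp (α : ℝ) : Fin 2 → ℂ := (Real.cos α : ℂ) • e2 0 + (Real.sin α : ℂ) • e2 1

/-- |x̄₊⟩ = sin α |0⟩ − cos α |1⟩. -/
def xbp (α : ℝ) : Fin 2 → ℂ := (Real.sin α : ℂ) • e2 0 - (Real.cos α : ℂ) • e2 1

/-- |x₋⟩ = (|0⟩ + e^{iπ/3}|1⟩)/√2. -/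
def xm : Fin 2 → ℂ :=
  (Real.sqrt 2 : ℂ)⁻¹ • (e2 0 + Complex.exp ((Real.pi / 3 : ℂ) * Complex.I) • e2 1)

/-- |x₋'⟩ = (|0⟩ + e^{−iπ/3}|1⟩)/√2. -/
def xm' : Fin 2 → ℂ :=
  (Real.sqrt 2 : ℂ)⁻¹ • (e2 0 + Complex.exp (-(Real.pi / 3 : ℂ) * Complex.I) • e2 1)

/-- |+⟩ = (|0⟩ + |1⟩)/√2. -/
def plus : Fin 2 → ℂ := (Real.sqrt 2 : ℂ)⁻¹ • (e2 0 + e2 1)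

/-- |−⟩ = (|0⟩ − |1⟩)/√2. -/
def minus : Fin 2 → ℂ := (Real.sqrt 2 : ℂ)⁻¹ • (e2 0 - e2 1)

/-- The one-way adaptive test operator
M_X = |+⟩⟨+| ⊗ (|x₊x₊⟩⟨x₊x₊| + |x̄₊x̄₊⟩⟨x̄₊x̄₊|) + |−⟩⟨−| ⊗ (I − |x₋x₋'⟩⟨x₋x₋'|). -/
def MX (α : ℝ) : Matrix T3 T3 ℂ :=
  kron (outer plus plus)
    (outer (tp2 (xp α) (xp α)) (tp2 (xp α) (xp α)) +
      outer (tp2 (xbp α) (xbp α)) (tp2 (xbp α) (xbp α))) +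
  kron (outer minus minus) (1 - outer (tp2 xm xm') (tp2 xm xm'))

/-- The qubit-permutation unitary V_σ with V_σ|i₁i₂i₃⟩ = |i_{σ⁻¹(1)} i_{σ⁻¹(2)} i_{σ⁻¹(3)}⟩,
as a matrix: (V_σ)_{p,q} = 1 iff the triple p precomposed with σ equals the triple q. -/
def permMat (σ : Equiv.Perm (Fin 3)) : Matrix T3 T3 ℂ :=
  fun p q => if (![p.1, p.2.1, p.2.2] ∘ σ) = ![q.1, q.2.1, q.2.2] then 1 else 0

/-- The single-qubit phase rotation R_φ = |0⟩⟨0| + e^{iφ}|1⟩⟨1|. -/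
def Rphi (φ : ℝ) : Matrix (Fin 2) (Fin 2) ℂ :=
  outer (e2 0) (e2 0) + Complex.exp ((φ : ℂ) * Complex.I) • outer (e2 1) (e2 1)

/-- The local unitary U₁ = R_{2π/3} ⊗ R_{2π/3} ⊗ R_{2π/3}. -/
def U1 : Matrix T3 T3 ℂ :=
  kron (Rphi (2 * Real.pi / 3)) (kron (Rphi (2 * Real.pi / 3)) (Rphi (2 * Real.pi / 3)))

/-- The projector Π₃ = |GHZ⟩⟨GHZ| + |W⟩⟨W| onto the GHZ-W subspace. -/
def Pi3 : Matrix T3 T3 ℂ := outer GHZ GHZ + outer Wst Wst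

/-- v₁ = (|000⟩ − |111⟩)/√2. -/
def v1 : T3 → ℂ := (Real.sqrt 2 : ℂ)⁻¹ • (ket3 0 0 0 - ket3 1 1 1)
/-- v₂ = (|001⟩ − |010⟩)/√2. -/
def v2 : T3 → ℂ := (Real.sqrt 2 : ℂ)⁻¹ • (ket3 0 0 1 - ket3 0 1 0)
/-- v₃ = (|001⟩ − |100⟩)/√2. -/
def v3 : T3 → ℂ := (Real.sqrt 2 : ℂ)⁻¹ • (ket3 0 0 1 - ket3 1 0 0)
/-- v₄ = (|011⟩ − |101⟩)/√2. -/
def v4 : T3 → ℂ := (Real.sqrt 2 : ℂ)⁻¹ • (ket3 0 1 1 - ket3 1 0 1)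
/-- v₅ = (|011⟩ − |110⟩)/√2. -/
def v5 : T3 → ℂ := (Real.sqrt 2 : ℂ)⁻¹ • (ket3 0 1 1 - ket3 1 1 0)
/-- v₆ = (|011⟩ + |101⟩ + |110⟩)/√3. -/
def v6 : T3 → ℂ := (Real.sqrt 3 : ℂ)⁻¹ • (ket3 0 1 1 + ket3 1 0 1 + ket3 1 1 0)

/-- σᵢ: the transposition exchanging qubits 1 and i (σ₁ = identity). -/
def sigmas : Fin 3 → Equiv.Perm (Fin 3) := ![1, Equiv.swap 0 1, Equiv.swap 0 2]

/-- M_{X,i} = V_{σᵢ} M_X V_{σᵢ}†: the test operator starting with an X measurement on qubit i. -/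
def MXi (α : ℝ) (i : Fin 3) : Matrix T3 T3 ℂ :=
  permMat (sigmas i) * MX α * (permMat (sigmas i))ᴴ

/-- The symmetrized test operator M̂_X = (1/9) Σ_{i=1}^{3} Σ_{j=0}^{2} U₁^{−j} M_{X,i} U₁^{j}. -/
def MXhat (α : ℝ) : Matrix T3 T3 ℂ :=
  ((1 : ℂ) / 9) • ∑ i : Fin 3, ∑ j : Fin 3, (U1 ^ (j : ℕ))⁻¹ * MXi α i * U1 ^ (j : ℕ)

/-- The rotation-strategy verification operator Ω_μ = (1 − μ) M_Z + μ M̂_X. -/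
def Omega (α μ : ℝ) : Matrix T3 T3 ℂ := ((1 - μ : ℝ) : ℂ) • MZ + (μ : ℂ) • MXhat α

/-- The projected verification operator Ω̂ = (I − Π₃) Ω_μ (I − Π₃). -/
def OmegaHat (α μ : ℝ) : Matrix T3 T3 ℂ := (1 - Pi3) * Omega α μ * (1 - Pi3)

/-- The set of (real) eigenvalues of Ω̂. -/
def eigSet (α μ : ℝ) : Set ℝ :=
  {r : ℝ | ∃ w : T3 → ℂ, w ≠ 0 ∧ OmegaHat α μ *ᵥ w = (r : ℂ) • w}

/-! The hypotheses make `M` preserve every eigenspace of `U₁` (spanned by the basis states of a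
fixed Hamming weight mod 3), every eigenspace of each `V_σ`, and, being Hermitian and fixing
`|GHZ⟩`, the orthogonal complement of `|GHZ⟩`. Each `vᵢ` spans the intersection of two of these
invariant subspaces, so it is an eigenvector; `v₃` and `v₅` are images of `v₂` and `v₄` under
qubit permutations, which commute with `M` and therefore preserve eigenvalues. -/

section Eigenvectors

variable {n R : Type*} [Fintype n]

theorem mulVec_mulVec_eq_smul_of_commute [CommSemiring R] {A M : Matrix n n R}
    (h : M * A = A * M) {x : n → R} {c : R} (hx : A *ᵥ x = c • x) :
    A *ᵥ (M *ᵥ x) = c • (M *ᵥ x) := by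
  rw [mulVec_mulVec, ← h, ← mulVec_mulVec, hx, mulVec_smul]

theorem mulVec_smul_eq_smul_of_mulVec_eq_smul [CommSemiring R] {M : Matrix n n R} {w : n → R}
    {c : R} (h : M *ᵥ w = c • w) (s : R) : M *ᵥ (s • w) = c • (s • w) := by
  rw [mulVec_smul, h, smul_comm]

theorem star_dotProduct_mulVec_eq_zero [CommSemiring R] [StarRing R] {M : Matrix n n R}
    (hM : M.IsHermitian) {u x : n → R} {c : R} (hu : M *ᵥ u = c • u) (hx : star u ⬝ᵥ x = 0) :
    star u ⬝ᵥ (M *ᵥ x) = 0 := by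
  rw [dotProduct_mulVec, ← hM.eq, ← star_mulVec, hu, star_smul, smul_dotProduct, hx, smul_zero]

theorem exists_mulVec_eq_smul_of_invariant [Semiring R] (M : Matrix n n R)
    (P : (n → R) → Prop) {w : n → R} (hw : P w) (hinv : ∀ x, P x → P (M *ᵥ x))
    (hline : ∀ x, P x → ∃ a : R, x = a • w) : ∃ c : R, M *ᵥ w = c • w :=
  hline _ (hinv w hw)

theorem exists_mulVec_eq_smul_of_commute_of_commute [CommSemiring R] {A B M : Matrix n n R}
    (hA : M * A = A * M) (hB : M * B = B * M) {a b : R} {w : n → R}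
    (hwA : A *ᵥ w = a • w) (hwB : B *ᵥ w = b • w)
    (hline : ∀ x, A *ᵥ x = a • x → B *ᵥ x = b • x → ∃ t : R, x = t • w) :
    ∃ c : R, M *ᵥ w = c • w :=
  exists_mulVec_eq_smul_of_invariant M (fun x => A *ᵥ x = a • x ∧ B *ᵥ x = b • x) ⟨hwA, hwB⟩
    (fun _ hx => ⟨mulVec_mulVec_eq_smul_of_commute hA hx.1,
      mulVec_mulVec_eq_smul_of_commute hB hx.2⟩)
    (fun x hx => hline x hx.1 hx.2)

end Eigenvectors

def ω : ℂ := Complex.exp (2 * Real.pi * Complex.I / 3)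

theorem isPrimitiveRoot_ω : IsPrimitiveRoot ω 3 := by
  unfold ω
  exact_mod_cast Complex.isPrimitiveRoot_exp 3 (by norm_num)

theorem ω_pow_eq_ω_pow_iff {a b : ℕ} : ω ^ a = ω ^ b ↔ a % 3 = b % 3 := by
  rw [(isPrimitiveRoot_ω.isOfFinOrder (by norm_num)).pow_inj_mod, ← isPrimitiveRoot_ω.eq_orderOf]

def hammingWeight (p : T3) : ℕ := p.1.val + p.2.1.val + p.2.2.val

theorem kron_diagonal {m n : Type*} [DecidableEq m] [DecidableEq n] (a : m → ℂ) (b : n → ℂ) :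
    kron (diagonal a) (diagonal b) = diagonal fun p => a p.1 * b p.2 := by
  ext ⟨i, k⟩ ⟨j, l⟩
  by_cases hij : i = j <;> by_cases hkl : k = l <;> simp [kron, diagonal, hij, hkl]

theorem Rphi_two_pi_div_three : Rphi (2 * Real.pi / 3) = diagonal fun i : Fin 2 => ω ^ (i : ℕ) := by
  ext i j
  fin_cases i <;> fin_cases j <;> simp [Rphi, outer, e2, ω, div_mul_eq_mul_div]

theorem U1_eq_diagonal : U1 = diagonal fun p => ω ^ hammingWeight p := by
  simp only [U1, Rphi_two_pi_div_three, kron_diagonal, hammingWeight, pow_add, mul_assoc]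

theorem U1_mulVec_eq_pow_smul_iff {x : T3 → ℂ} {k : ℕ} :
    U1 *ᵥ x = ω ^ k • x ↔ ∀ p, hammingWeight p % 3 ≠ k % 3 → x p = 0 := by
  simp only [funext_iff, U1_eq_diagonal, mulVec_diagonal, Pi.smul_apply, smul_eq_mul]
  refine forall_congr' fun p => ?_
  rw [← sub_eq_zero, ← sub_mul, mul_eq_zero, sub_eq_zero, ω_pow_eq_ω_pow_iff]
  tauto

def qubitPerm (σ : Equiv.Perm (Fin 3)) (p : T3) : T3 :=
  let f := ![p.1, p.2.1, p.2.2] ∘ σ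
  (f 0, f 1, f 2)

theorem permMat_mulVec (σ : Equiv.Perm (Fin 3)) (x : T3 → ℂ) :
    permMat σ *ᵥ x = x ∘ qubitPerm σ := by
  ext p
  have hq : ∀ q : T3, ![p.1, p.2.1, p.2.2] ∘ σ = ![q.1, q.2.1, q.2.2] ↔ qubitPerm σ p = q := by
    intro q
    simp [funext_iff, Fin.forall_fin_succ, Prod.ext_iff, qubitPerm, eq_comm]
  simp [mulVec, dotProduct, permMat, hq]

@[simp]
theorem qubitPerm_swap_zero_one (a b c : Fin 2) :
    qubitPerm (Equiv.swap 0 1) (a, b, c) = (b, a, c) := by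
  simp [qubitPerm, Equiv.swap_apply_def]

@[simp]
theorem qubitPerm_swap_one_two (a b c : Fin 2) :
    qubitPerm (Equiv.swap 1 2) (a, b, c) = (a, c, b) := by
  simp [qubitPerm, Equiv.swap_apply_def]

@[simp]
theorem qubitPerm_finRotate (a b c : Fin 2) : qubitPerm (finRotate 3) (a, b, c) = (b, c, a) := by
  simp [qubitPerm]

section Eigenvalues

variable {M : Matrix T3 T3 ℂ}

theorem exists_eigenvalue_v1 (hH : M.IsHermitian) (hU : M * U1 = U1 * M)
    (hGHZ : M *ᵥ GHZ = GHZ) : ∃ c : ℂ, M *ᵥ v1 = c • v1 := by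
  obtain ⟨c, hc⟩ : ∃ c : ℂ, M *ᵥ (ket3 0 0 0 - ket3 1 1 1) = c • (ket3 0 0 0 - ket3 1 1 1) := by
    refine exists_mulVec_eq_smul_of_invariant M
      (fun x => U1 *ᵥ x = ω ^ 0 • x ∧ star GHZ ⬝ᵥ x = 0) ⟨?_, ?_⟩ ?_ ?_
    · rw [U1_mulVec_eq_pow_smul_iff]
      rintro ⟨i, j, k⟩ hp
      fin_cases i <;> fin_cases j <;> fin_cases k <;> simp_all [hammingWeight, ket3, tp3, e2]
    · simp [GHZ, dotProduct, Fintype.sum_prod_type, ket3, tp3, e2]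
    · rintro x ⟨h1, h2⟩
      exact ⟨mulVec_mulVec_eq_smul_of_commute hU h1,
        star_dotProduct_mulVec_eq_zero hH (c := 1) (by rw [one_smul, hGHZ]) h2⟩
    · rintro x ⟨h1, h2⟩
      rw [U1_mulVec_eq_pow_smul_iff] at h1
      have h111 : x (1, 1, 1) = -x (0, 0, 0) := by
        simpa [GHZ, dotProduct, Fintype.sum_prod_type, ket3, tp3, e2, ← mul_add,
          add_eq_zero_iff_eq_neg'] using h2
      refine ⟨x (0, 0, 0), ?_⟩
      ext ⟨i, j, k⟩
      fin_cases i <;> fin_cases j <;> fin_cases k <;>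
        simp [ket3, tp3, e2, h111, h1, hammingWeight]
  exact ⟨c, mulVec_smul_eq_smul_of_mulVec_eq_smul hc _⟩

variable (hperm : ∀ σ, M * permMat σ = permMat σ * M) (hU : M * U1 = U1 * M)
include hperm hU

theorem exists_eigenvalue_v2_v3 : ∃ c : ℂ, M *ᵥ v2 = c • v2 ∧ M *ᵥ v3 = c • v3 := by
  obtain ⟨c, hc⟩ : ∃ c : ℂ, M *ᵥ (ket3 0 0 1 - ket3 0 1 0) = c • (ket3 0 0 1 - ket3 0 1 0) := by
    refine exists_mulVec_eq_smul_of_commute_of_commute hU (hperm (Equiv.swap 1 2))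
      (a := ω ^ 1) (b := -1) ?_ ?_ ?_
    · rw [U1_mulVec_eq_pow_smul_iff]
      rintro ⟨i, j, k⟩ hp
      fin_cases i <;> fin_cases j <;> fin_cases k <;> simp_all [hammingWeight, ket3, tp3, e2]
    · rw [permMat_mulVec]
      ext ⟨i, j, k⟩
      fin_cases i <;> fin_cases j <;> fin_cases k <;> simp [ket3, tp3, e2]
    · intro x h1 h2
      rw [U1_mulVec_eq_pow_smul_iff] at h1
      rw [permMat_mulVec] at h2
      have h010 : x (0, 1, 0) = -x (0, 0, 1) := by simpa using congrFun h2 (0, 0, 1)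
      have h100 : x (1, 0, 0) = 0 := by simpa [self_eq_neg] using congrFun h2 (1, 0, 0)
      refine ⟨x (0, 0, 1), ?_⟩
      ext ⟨i, j, k⟩
      fin_cases i <;> fin_cases j <;> fin_cases k <;>
        simp [ket3, tp3, e2, h010, h100, h1, hammingWeight]
  have hv3 : permMat (Equiv.swap 0 1) *ᵥ (ket3 0 0 1 - ket3 0 1 0) = ket3 0 0 1 - ket3 1 0 0 := by
    rw [permMat_mulVec]
    ext ⟨i, j, k⟩
    fin_cases i <;> fin_cases j <;> fin_cases k <;> simp [ket3, tp3, e2]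
  refine ⟨c, mulVec_smul_eq_smul_of_mulVec_eq_smul hc _, mulVec_smul_eq_smul_of_mulVec_eq_smul ?_ _⟩
  rw [← hv3]
  exact mulVec_mulVec_eq_smul_of_commute (hperm _).symm hc

theorem exists_eigenvalue_v4_v5 : ∃ c : ℂ, M *ᵥ v4 = c • v4 ∧ M *ᵥ v5 = c • v5 := by
  obtain ⟨c, hc⟩ : ∃ c : ℂ, M *ᵥ (ket3 0 1 1 - ket3 1 0 1) = c • (ket3 0 1 1 - ket3 1 0 1) := by
    refine exists_mulVec_eq_smul_of_commute_of_commute hU (hperm (Equiv.swap 0 1))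
      (a := ω ^ 2) (b := -1) ?_ ?_ ?_
    · rw [U1_mulVec_eq_pow_smul_iff]
      rintro ⟨i, j, k⟩ hp
      fin_cases i <;> fin_cases j <;> fin_cases k <;> simp_all [hammingWeight, ket3, tp3, e2]
    · rw [permMat_mulVec]
      ext ⟨i, j, k⟩
      fin_cases i <;> fin_cases j <;> fin_cases k <;> simp [ket3, tp3, e2]
    · intro x h1 h2
      rw [U1_mulVec_eq_pow_smul_iff] at h1
      rw [permMat_mulVec] at h2
      have h101 : x (1, 0, 1) = -x (0, 1, 1) := by simpa using congrFun h2 (0, 1, 1)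
      have h110 : x (1, 1, 0) = 0 := by simpa [self_eq_neg] using congrFun h2 (1, 1, 0)
      refine ⟨x (0, 1, 1), ?_⟩
      ext ⟨i, j, k⟩
      fin_cases i <;> fin_cases j <;> fin_cases k <;>
        simp [ket3, tp3, e2, h101, h110, h1, hammingWeight]
  have hv5 : permMat (Equiv.swap 1 2) *ᵥ (ket3 0 1 1 - ket3 1 0 1) = ket3 0 1 1 - ket3 1 1 0 := by
    rw [permMat_mulVec]
    ext ⟨i, j, k⟩
    fin_cases i <;> fin_cases j <;> fin_cases k <;> simp [ket3, tp3, e2]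
  refine ⟨c, mulVec_smul_eq_smul_of_mulVec_eq_smul hc _, mulVec_smul_eq_smul_of_mulVec_eq_smul ?_ _⟩
  rw [← hv5]
  exact mulVec_mulVec_eq_smul_of_commute (hperm _).symm hc

theorem exists_eigenvalue_v6 : ∃ c : ℂ, M *ᵥ v6 = c • v6 := by
  obtain ⟨c, hc⟩ : ∃ c : ℂ, M *ᵥ (ket3 0 1 1 + ket3 1 0 1 + ket3 1 1 0) =
      c • (ket3 0 1 1 + ket3 1 0 1 + ket3 1 1 0) := by
    refine exists_mulVec_eq_smul_of_commute_of_commute hU (hperm (finRotate 3))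
      (a := ω ^ 2) (b := 1) ?_ ?_ ?_
    · rw [U1_mulVec_eq_pow_smul_iff]
      rintro ⟨i, j, k⟩ hp
      fin_cases i <;> fin_cases j <;> fin_cases k <;> simp_all [hammingWeight, ket3, tp3, e2]
    · rw [permMat_mulVec]
      ext ⟨i, j, k⟩
      fin_cases i <;> fin_cases j <;> fin_cases k <;> simp [ket3, tp3, e2]
    · intro x h1 h2
      rw [U1_mulVec_eq_pow_smul_iff] at h1
      rw [permMat_mulVec, one_smul] at h2
      have h110 : x (1, 1, 0) = x (0, 1, 1) := by simpa using congrFun h2 (0, 1, 1)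
      have h101 : x (1, 0, 1) = x (1, 1, 0) := by simpa using congrFun h2 (1, 1, 0)
      refine ⟨x (0, 1, 1), ?_⟩
      ext ⟨i, j, k⟩
      fin_cases i <;> fin_cases j <;> fin_cases k <;>
        simp [ket3, tp3, e2, h101, h110, h1, hammingWeight]
  exact ⟨c, mulVec_smul_eq_smul_of_mulVec_eq_smul hc _⟩

end Eigenvalues

theorem symmetric_test_operator_is_diagonal_general
    (M : Matrix T3 T3 ℂ) (hH : M.IsHermitian)
    (hperm : ∀ σ : Equiv.Perm (Fin 3), M * permMat σ = permMat σ * M)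
    (hU : M * U1 = U1 * M)
    (hGHZ : M *ᵥ GHZ = GHZ) :
    ∃ c1 c2 c3 c4 : ℂ,
      M *ᵥ v1 = c1 • v1 ∧
      M *ᵥ v2 = c2 • v2 ∧ M *ᵥ v3 = c2 • v3 ∧
      M *ᵥ v4 = c3 • v4 ∧ M *ᵥ v5 = c3 • v5 ∧
      M *ᵥ v6 = c4 • v6 := by
  obtain ⟨c1, h1⟩ := exists_eigenvalue_v1 hH hU hGHZ
  obtain ⟨c2, h2, h3⟩ := exists_eigenvalue_v2_v3 hperm hU
  obtain ⟨c3, h4, h5⟩ := exists_eigenvalue_v4_v5 hperm hU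
  obtain ⟨c4, h6⟩ := exists_eigenvalue_v6 hperm hU
  exact ⟨c1, c2, c3, c4, h1, h2, h3, h4, h5, h6⟩

/-- Any Hermitian operator commuting with all qubit permutations V_σ and with U₁ and fixing
|GHZ⟩ and |W⟩ has v₁, ..., v₆ as eigenvectors, with v₂, v₃ sharing a common eigenvalue and
v₄, v₅ sharing a common eigenvalue. -/
theorem symmetric_test_operator_is_diagonal
    (M : Matrix T3 T3 ℂ) (hH : M.IsHermitian)
    (hperm : ∀ σ : Equiv.Perm (Fin 3), M * permMat σ = permMat σ * M)
    (hU : M * U1 = U1 * M)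
    (hGHZ : M *ᵥ GHZ = GHZ) (hW : M *ᵥ Wst = Wst) :
    ∃ c1 c2 c3 c4 : ℂ,
      M *ᵥ v1 = c1 • v1 ∧
      M *ᵥ v2 = c2 • v2 ∧ M *ᵥ v3 = c2 • v3 ∧
      M *ᵥ v4 = c3 • v4 ∧ M *ᵥ v5 = c3 • v5 ∧
      M *ᵥ v6 = c4 • v6 :=
  symmetric_test_operator_is_diagonal_general M hH hperm hU hGHZ
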